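/- For every k ∈ ℕ, A_{2k} = (m−1)^k · C_k, where C_k = (1/(k+1))·binomial(2k, k) is the k-th Catalan number. -/

import Mathlib

open scoped InnerProductSpace
open Complex Real

section CatalanTreeAux

open SimpleGraph Walk


variable {V : Type} {G : SimpleGraph V}

private lemma takeUntil_start [DecidableEq V] {v w : V} (p : G.Walk v w) (h : v ∈ p.support) :
    p.takeUntil v h = Walk.nil := by
  cases p with
  | nil => simp [Walk.takeUntil]
  | cons r p => simp [Walk.takeUntil]

private lemma dropUntil_start [DecidableEq V] {v w : V} (p : G.Walk v w) (h : v ∈ p.support) :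
    p.dropUntil v h = p := by
  cases p with
  | nil => simp [Walk.dropUntil]
  | cons r p => simp [Walk.dropUntil]

private lemma takeUntil_append_of_not_mem_dropLast [DecidableEq V] {w v v' : V}
    (r : G.Walk w v) (d : G.Walk v v') (hr : ∀ y ∈ r.support.dropLast, y ≠ v)
    (h : v ∈ (r.append d).support) :
    (r.append d).takeUntil v h = r ∧ (r.append d).dropUntil v h = d := by
  induction r with
  | nil =>
    exact ⟨takeUntil_start d h, dropUntil_start d h⟩
  | @cons w y v a r ih =>
    have hw : w ≠ v := by
      apply hr
      rw [Walk.support_cons]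
      rw [List.dropLast_cons_of_ne_nil (Walk.support_ne_nil r)]
      exact List.mem_cons_self
    have hr' : ∀ y ∈ r.support.dropLast, y ≠ v := by
      intro z hz
      apply hr
      rw [Walk.support_cons, List.dropLast_cons_of_ne_nil (Walk.support_ne_nil r)]
      exact List.mem_cons_of_mem _ hz
    have h2 : v ∈ (r.append d).support := by
      cases h with
      | head => exact absurd rfl hw
      | tail _ h => exact h
    obtain ⟨h3, h4⟩ := ih d hr' h2
    constructor
    · simp only [Walk.cons_append, Walk.takeUntil, dif_neg hw]
      rw [h3]
    · simp only [Walk.cons_append, Walk.dropUntil, dif_neg hw]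
      exact h4

private lemma edge_mem_of_mem_support [DecidableEq V] (hG : G.IsAcyclic) {w v u' : V} (h : G.Adj w v)
    (c : G.Walk w u') (hv : v ∈ c.support) : s(w, v) ∈ c.edges := by
  classical
  have hsub := c.edges_takeUntil_subset hv
  have hpath : (c.takeUntil v hv).toPath = (⟨Walk.cons h Walk.nil, by simp [h.ne]⟩ : G.Path w v) :=
    hG.path_unique _ _
  apply hsub
  apply Walk.edges_bypass_subset
  have hb : (c.takeUntil v hv).bypass = Walk.cons h Walk.nil := congrArg Subtype.val hpath
  rw [hb]; simp

private lemma mem_support_of_two [DecidableEq V] (hG : G.IsAcyclic) {v w z : V} (hw : G.Adj v w)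
    (hz : G.Adj v z) (hne : w ≠ z) (c : G.Walk w z) : v ∈ c.support := by
  have hp : (Walk.cons hw.symm (Walk.cons hz Walk.nil)).IsPath := by
    simp [Walk.isPath_def, hw.ne', hz.ne, hne]
  have huniq := hG.path_unique c.toPath ⟨_, hp⟩
  have hv : v ∈ c.toPath.1.support := by rw [huniq]; simp
  exact Walk.support_bypass_subset _ hv

private lemma exists_concat [DecidableEq V] (hG : G.IsAcyclic) {w v : V} (hvw : G.Adj v w) (r : G.Walk w v)
    (hr : ∀ y ∈ r.support.dropLast, y ≠ v) :
    ∃ (c : G.Walk w w), r = c.concat hvw.symm ∧ v ∉ c.support := by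
  obtain ⟨z, h', q', hq'⟩ := Walk.exists_eq_cons_of_ne hvw.ne r.reverse
  have hr' : r = q'.reverse.concat h'.symm := by
    rw [← r.reverse_reverse, hq', Walk.reverse_cons, Walk.concat_eq_append]
  have hvq : v ∉ q'.reverse.support := by
    intro hvmem
    have hdl : r.support.dropLast = q'.reverse.support := by
      rw [hr', Walk.support_concat, List.dropLast_concat]
    exact (hr v (by rw [hdl]; exact hvmem)) rfl
  have hz : z = w := by
    by_contra hzw
    have : v ∈ q'.support := mem_support_of_two hG h' hvw hzw q'
    rw [Walk.support_reverse, List.mem_reverse] at hvq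
    exact hvq this
  subst hz
  exact ⟨q'.reverse, hr', hvq⟩

private lemma sym2_ne {v u w : V} (h1 : w ≠ u) (h2 : v ≠ w) (h3 : u ≠ v) :
    s(v, u) ≠ s(v, w) ∧ s(v, u) ≠ s(w, v) := by
  constructor <;> · intro h; rw [Sym2.eq_iff] at h; tauto

private def Ftype (G : SimpleGraph V) (v u : V) (k : ℕ) : Type :=
  Σ (w : {w : V // G.Adj v w ∧ w ≠ u}) (i : Fin (k + 1)),
    {c : G.Walk w.1 w.1 // c.length = i.1 ∧ s(w.1, v) ∉ c.edges} ×
    {d : G.Walk v v // d.length = k - i.1 ∧ s(v, u) ∉ d.edges}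

private def F [DecidableEq V] (hG : G.IsAcyclic) {v u : V} (hvu : G.Adj v u) (k : ℕ) :
    Ftype G v u k → {p : G.Walk v v // p.length = k + 2 ∧ s(v, u) ∉ p.edges} :=
  fun s =>
    ⟨Walk.cons s.1.2.1 ((s.2.2.1.1.concat s.1.2.1.symm).append s.2.2.2.1), by
      obtain ⟨⟨w, hw, hwu⟩, ⟨i, hi⟩, ⟨⟨c, hc1, hc2⟩, ⟨d, hd1, hd2⟩⟩⟩ := s
      have hvc : v ∉ c.support := fun hv => hc2 (edge_mem_of_mem_support hG hw.symm c hv)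
      obtain ⟨hne1, hne2⟩ := sym2_ne hwu hw.ne hvu.ne'
      constructor
      · simp only [Walk.length_cons, Walk.length_append, Walk.length_concat, hc1, hd1]
        omega
      · simp only [Walk.edges_cons, Walk.edges_append, Walk.edges_concat, List.mem_cons,
          List.mem_append, List.concat_eq_append, List.mem_singleton]
        push_neg
        refine ⟨hne1, ⟨fun hmem => ?_, hne2, by simp⟩, hd2⟩
        exact hvc (Walk.fst_mem_support_of_mem_edges c hmem)⟩

private lemma interior_ne [DecidableEq V] {w v : V} (r : G.Walk w v)
    (hc : r.support.count v = 1) : ∀ y ∈ r.support.dropLast, y ≠ v := by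
  intro y hy hyv
  rw [hyv] at hy
  have h1 : r.support.dropLast ++ [v] = r.support := by
    conv_rhs => rw [← List.dropLast_append_getLast (Walk.support_ne_nil r)]
    rw [Walk.getLast_support]
  have h2 : r.support.count v = r.support.dropLast.count v + 1 := by
    rw [← h1, List.count_append]; simp
  rw [hc] at h2
  have h0 : r.support.dropLast.count v = 0 := by omega
  rw [List.count_eq_zero] at h0
  exact h0 hy

private lemma takeUntil_append' [DecidableEq V] {w v v' : V} (q : G.Walk w v')
    (h : v ∈ q.support) (r : G.Walk w v) (d : G.Walk v v')
    (hr : ∀ y ∈ r.support.dropLast, y ≠ v) (hq : q = r.append d) :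
    q.takeUntil v h = r ∧ q.dropUntil v h = d := by
  subst hq; exact takeUntil_append_of_not_mem_dropLast r d hr h

private lemma concat_interior [DecidableEq V] (hG : G.IsAcyclic) {w v : V} (h : G.Adj w v)
    (c : G.Walk w w) (hc : s(w, v) ∉ c.edges) :
    ∀ y ∈ (c.concat h).support.dropLast, y ≠ v := by
  have hvc : v ∉ c.support := fun hv => hc (edge_mem_of_mem_support hG h c hv)
  intro y hy
  rw [Walk.support_concat, List.dropLast_concat] at hy
  exact fun hyv => hvc (hyv ▸ hy)

private lemma F_bij [DecidableEq V] (hG : G.IsAcyclic) {v u : V} (hvu : G.Adj v u) (k : ℕ) :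
    Function.Bijective (F hG hvu k) := by
  constructor
  · rintro ⟨⟨w, hw, hwu⟩, ⟨i, hi⟩, ⟨⟨c, hc1, hc2⟩, ⟨d, hd1, hd2⟩⟩⟩
      ⟨⟨w', hw', hwu'⟩, ⟨i', hi'⟩, ⟨⟨c', hc1', hc2'⟩, ⟨d', hd1', hd2'⟩⟩⟩ hF
    simp only [F, Subtype.mk.injEq] at hF
    have hww : w = w' := by
      have h1 := congrArg (fun p => p.getVert 1) hF
      simpa using h1
    subst hww
    have hq : (c.concat hw.symm).append d = (c'.concat hw'.symm).append d' := by
      have h2 := congrArg (fun p => p.copy rfl rfl) hF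
      simpa using hF
    have hmem : v ∈ ((c.concat hw.symm).append d).support := by
      rw [Walk.mem_support_append_iff]
      exact Or.inl (Walk.end_mem_support _)
    have e1 := takeUntil_append' _ hmem (c.concat hw.symm) d (concat_interior hG hw.symm c hc2) rfl
    have e2 := takeUntil_append' _ hmem (c'.concat hw'.symm) d' (concat_interior hG hw'.symm c' hc2') hq
    have hrr : c.concat hw.symm = c'.concat hw'.symm := e1.1.symm.trans e2.1
    have hdd : d = d' := e1.2.symm.trans e2.2
    obtain ⟨h9, h10⟩ := Walk.concat_inj hrr
    rw [Walk.copy_rfl_rfl] at h10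
    subst h10
    subst hdd
    have hii : i = i' := by simp only [Fin.val_mk] at hc1 hc1'; omega
    subst hii
    rfl
  · rintro ⟨p, hp, hxp⟩
    cases p with
    | nil => simp at hp
    | @cons _ w _ hw q =>
      have hwu : w ≠ u := by
        rintro rfl
        exact hxp (by rw [Walk.edges_cons]; exact List.mem_cons_self)
      rw [Walk.edges_cons, List.mem_cons] at hxp
      push_neg at hxp
      obtain ⟨hxp1, hxp2⟩ := hxp
      have hv : v ∈ q.support := Walk.end_mem_support q
      set r := q.takeUntil v hv with hr
      set d := q.dropUntil v hv with hd
      have hspec : r.append d = q := q.take_spec hv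
      have hint : ∀ y ∈ r.support.dropLast, y ≠ v :=
        interior_ne r (q.count_support_takeUntil_eq_one hv)
      obtain ⟨c, hc, hvc⟩ := exists_concat hG hw r hint
      have hlen : c.length + 1 + d.length = k + 1 := by
        have := congrArg Walk.length hspec
        rw [Walk.length_append, hc, Walk.length_concat] at this
        rw [Walk.length_cons] at hp
        omega
      have hedges : s(v, u) ∉ d.edges := by
        intro hmem
        apply hxp2
        rw [← hspec, Walk.edges_append, List.mem_append]
        exact Or.inr hmem
      have hcw : s(w, v) ∉ c.edges := fun hmem =>
        hvc (Walk.snd_mem_support_of_mem_edges c hmem)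
      refine ⟨⟨⟨w, hw, hwu⟩, ⟨c.length, by omega⟩, ⟨⟨c, rfl, hcw⟩, ⟨d, by simp only [Fin.val_mk]; omega, hedges⟩⟩⟩, ?_⟩
      apply Subtype.ext
      show Walk.cons hw ((c.concat hw.symm).append d) = Walk.cons hw q
      rw [← hc, hspec]

private lemma card_sigma' {ι : Type} [Fintype ι] (β : ι → Type) [∀ i, Finite (β i)] :
    Nat.card (Σ i, β i) = ∑ i, Nat.card (β i) := by
  letI : ∀ i, Fintype (β i) := fun i => Fintype.ofFinite (β i)
  rw [Nat.card_eq_fintype_card, Fintype.card_sigma]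
  exact Finset.sum_congr rfl fun i _ => Nat.card_eq_fintype_card.symm

private lemma walk_count [∀ v : V, Fintype (G.neighborSet v)] {m : ℕ}
    (hG : G.IsAcyclic) (hdeg : ∀ v : V, G.degree v = m) :
    ∀ (n : ℕ) (v u : V), G.Adj v u →
      Nat.card {p : G.Walk v v // p.length = n ∧ s(v, u) ∉ p.edges} =
        if 2 ∣ n then (m - 1) ^ (n / 2) * catalan (n / 2) else 0 := by
  classical
  intro n
  induction n using Nat.strong_induction_on with
  | _ n ih =>
    match n with
    | 0 =>
      intro v u hvu
      rw [if_pos ⟨0, rfl⟩]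
      haveI : Unique {p : G.Walk v v // p.length = 0 ∧ s(v, u) ∉ p.edges} := by
        refine ⟨⟨⟨Walk.nil, by simp⟩⟩, ?_⟩
        rintro ⟨p, hp, hx⟩
        cases p with
        | nil => rfl
        | cons h q => simp at hp
      rw [Nat.card_unique]
      simp
    | 1 =>
      intro v u hvu
      rw [if_neg (by omega)]
      haveI : IsEmpty {p : G.Walk v v // p.length = 1 ∧ s(v, u) ∉ p.edges} := by
        constructor
        rintro ⟨p, hp, hx⟩
        cases p with
        | nil => simp at hp
        | cons h q =>
          rw [Walk.length_cons] at hp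
          have hq := Walk.eq_of_length_eq_zero (by omega : q.length = 0)
          exact G.irrefl (hq ▸ h)
      rw [Nat.card_of_isEmpty]
    | (k + 2) =>
      intro v u hvu
      haveI fin1 : ∀ (a b : V) (n : ℕ) (P : G.Walk a b → Prop),
          Finite {p : G.Walk a b // p.length = n ∧ P p} := fun a b n P =>
        Finite.of_injective
          (fun p => (⟨p.1, p.2.1⟩ : {p : G.Walk a b // p.length = n}))
          (fun p q h => Subtype.ext (by simpa using congrArg Subtype.val h))
      haveI : Finite {w : V // G.Adj v w ∧ w ≠ u} :=
        Finite.of_injective (fun w => (⟨w.1, w.2.1⟩ : G.neighborSet v))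
          (fun a b h => Subtype.ext (by simpa using congrArg Subtype.val h))
      haveI : Fintype {w : V // G.Adj v w ∧ w ≠ u} := Fintype.ofFinite _
      have hcardW : Fintype.card {w : V // G.Adj v w ∧ w ≠ u} = m - 1 := by
        have he : {w : V // G.Adj v w ∧ w ≠ u} ≃ {w : V // w ∈ G.neighborFinset v \ {u}} :=
          Equiv.subtypeEquivRight (by
            intro w
            simp [Finset.mem_sdiff, SimpleGraph.mem_neighborFinset])
        rw [Fintype.card_congr he, Fintype.card_coe,
          Finset.card_sdiff_of_subset (by simp [hvu]), Finset.card_singleton]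
        have hdv : (G.neighborFinset v).card = m := hdeg v
        rw [hdv]
      have hmain : Nat.card {p : G.Walk v v // p.length = k + 2 ∧ s(v, u) ∉ p.edges}
          = Nat.card (Ftype G v u k) :=
        (Nat.card_congr (Equiv.ofBijective _ (F_bij hG hvu k))).symm
      set f : ℕ → ℕ := fun j => if 2 ∣ j then (m - 1) ^ (j / 2) * catalan (j / 2) else 0 with hf
      have hsum : Nat.card {p : G.Walk v v // p.length = k + 2 ∧ s(v, u) ∉ p.edges}
          = (m - 1) * ∑ i : Fin (k + 1), f i.1 * f (k - i.1) := by
        rw [hmain]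
        unfold Ftype
        rw [card_sigma']
        have hterm : ∀ w : {w : V // G.Adj v w ∧ w ≠ u},
            Nat.card (Σ i : Fin (k + 1),
              {c : G.Walk w.1 w.1 // c.length = i.1 ∧ s(w.1, v) ∉ c.edges} ×
              {d : G.Walk v v // d.length = k - i.1 ∧ s(v, u) ∉ d.edges})
            = ∑ i : Fin (k + 1), f i.1 * f (k - i.1) := by
          intro w
          rw [card_sigma']
          refine Finset.sum_congr rfl fun i _ => ?_
          have hik := i.isLt
          rw [Nat.card_prod,
            ih i.1 (by omega) w.1 v w.2.1.symm,
            ih (k - i.1) (by omega) v u hvu]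
        rw [Finset.sum_congr rfl fun w _ => hterm w, Finset.sum_const, Finset.card_univ, hcardW, smul_eq_mul]
      rw [hsum]
      rcases Nat.even_or_odd k with ⟨t, rfl⟩ | ⟨t, rfl⟩
      · -- even case
        have hS : ∑ i : Fin (t + t + 1), f i.1 * f (t + t - i.1)
            = (m - 1) ^ t * catalan (t + 1) := by
          rw [Fin.sum_univ_eq_sum_range (fun i => f i * f (t + t - i))]
          have himage : (Finset.range (t + 1)).image (fun j => 2 * j)
              ⊆ Finset.range (t + t + 1) := by
            intro x hx
            simp only [Finset.mem_image, Finset.mem_range] at *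
            obtain ⟨j, hj, rfl⟩ := hx
            omega
          have hzero : ∀ x ∈ Finset.range (t + t + 1),
              x ∉ (Finset.range (t + 1)).image (fun j => 2 * j) → f x * f (t + t - x) = 0 := by
            intro x hx hnx
            have hodd : ¬ 2 ∣ x := by
              rintro ⟨j, rfl⟩
              apply hnx
              simp only [Finset.mem_image, Finset.mem_range] at *
              exact ⟨j, by omega, rfl⟩
            rw [hf]
            simp [hodd]
          rw [← Finset.sum_subset himage hzero,
            Finset.sum_image (by intros a _ b _ h; simp only at h; omega)]
          have hterm2 : ∀ j ∈ Finset.range (t + 1),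
              f (2 * j) * f (t + t - 2 * j)
                = (m - 1) ^ t * (catalan j * catalan (t - j)) := by
            intro j hj
            rw [Finset.mem_range] at hj
            have h1 : f (2 * j) = (m - 1) ^ j * catalan j := by
              rw [hf]
              simp [Nat.mul_div_cancel_left]
            have h2 : t + t - 2 * j = 2 * (t - j) := by omega
            have h3 : f (t + t - 2 * j) = (m - 1) ^ (t - j) * catalan (t - j) := by
              rw [h2, hf]
              simp [Nat.mul_div_cancel_left]
            rw [h1, h3,
              show (m - 1) ^ j * catalan j * ((m - 1) ^ (t - j) * catalan (t - j))
                = ((m - 1) ^ j * (m - 1) ^ (t - j)) * (catalan j * catalan (t - j)) by ring,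
              ← pow_add, Nat.add_sub_cancel' (by omega : j ≤ t)]
          rw [Finset.sum_congr rfl hterm2, ← Finset.mul_sum]
          congr 1
          rw [catalan_succ, Fin.sum_univ_eq_sum_range (fun j => catalan j * catalan (t - j))]
        rw [hS, if_pos (by omega : 2 ∣ t + t + 2), (by omega : (t + t + 2) / 2 = t + 1)]
        ring
      · -- odd case
        rw [if_neg (by omega)]
        have hS : ∑ i : Fin (2 * t + 1 + 1), f i.1 * f (2 * t + 1 - i.1) = 0 := by
          apply Finset.sum_eq_zero
          intro i _
          have hik := i.isLt
          by_cases h2 : 2 ∣ i.1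
          · have hnd : ¬ 2 ∣ (2 * t + 1 - i.1) := by omega
            rw [hf]
            simp [hnd]
          · rw [hf]
            simp [h2]
        rw [hS, Nat.mul_zero]


end CatalanTreeAux

/-- **Catalan-number formula for the restricted return-walk counts on the `m`-regular
tree:** `A_{2k} = (m-1)^k C_k`, where `C_k = (1/(k+1))·binom(2k,k)` is the `k`-th Catalan
number. -/
theorem stmt_17
    (m : ℕ) (hm : 3 ≤ m)
    (V : Type) (G : SimpleGraph V)
    [∀ v : V, Fintype (G.neighborSet v)]
    (hconn : G.Connected) (hacyc : G.IsAcyclic)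
    (hdeg : ∀ v : V, G.degree v = m)
    (e : V) (x₁ : Sym2 V) (hx₁ : x₁ ∈ G.edgeSet) (hex₁ : e ∈ x₁)
    (A : ℕ → ℕ)
    (hA : ∀ k : ℕ, A k = Nat.card {p : G.Walk e e // p.length = k ∧ x₁ ∉ p.edges}) :
    ∀ k : ℕ, A (2 * k) = (m - 1) ^ k * ((2 * k).choose k / (k + 1)) := by
  classical
  obtain ⟨u, rfl⟩ := Sym2.mem_iff_exists.mp hex₁
  have hadj : G.Adj e u := hx₁
  intro k
  rw [hA, walk_count hacyc hdeg (2 * k) e u hadj,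
    if_pos (by omega : 2 ∣ 2 * k), (by omega : 2 * k / 2 = k),
    catalan_eq_centralBinom_div]
  rfl
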